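/- arXiv:1301.4439 — 2 statements merged into one kernel-verified Lean document; each statement's English description precedes it below -/
import Mathlib

section
/- Let G be an n×n real matrix that is diagonalizable with nonnegative real eigenvalues, i.e. G = V D V⁻¹ for an invertible matrix V and a diagonal matrix D with all diagonal entries D_ii ≥ 0. Let E be the diagonal matrix with E_ii = 1 if D_ii = 0 and E_ii = 0 otherwise, and let D♯ be the diagonal matrix with (D♯)_ii = (D_ii)⁻¹ if D_ii ≠ 0 and (D♯)_ii = 0 otherwise. Then the improper integral ∫₀^∞ (exp(−G·τ) − V E V⁻¹) dτ converges entrywise and equals V D♯ V⁻¹. -/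
/-!
Conjugating by `V`, `exp (-τ G) - V E V⁻¹ = V diag (exp (-d_k τ) - [d_k = 0]) V⁻¹`. Each diagonal
factor vanishes when `d_k = 0` and is a decaying exponential with integral `d_k⁻¹` otherwise, and
the entries of `V diag (·) V⁻¹` are finite linear combinations of these factors, so the integral
can be taken factor by factor.
-/

open Matrix MeasureTheory Set

lemma integrableOn_exp_neg_mul_sub_ite {d : ℝ} (hd : 0 ≤ d) :
    IntegrableOn (fun τ => Real.exp (-d * τ) - if d = 0 then 1 else 0) (Ioi 0) := by
  rcases hd.eq_or_lt with rfl | hpos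
  · simp
  · simpa [hpos.ne'] using integrableOn_exp_mul_Ioi (neg_neg_of_pos hpos) 0

lemma integral_exp_neg_mul_sub_ite {d : ℝ} (hd : 0 ≤ d) :
    ∫ τ in Ioi 0, (Real.exp (-d * τ) - if d = 0 then 1 else 0) = if d ≠ 0 then d⁻¹ else 0 := by
  rcases hd.eq_or_lt with rfl | hpos
  · simp
  · simp only [hpos.ne', if_false, if_true, ne_eq, not_false_eq_true, sub_zero]
    rw [integral_exp_mul_Ioi (neg_neg_of_pos hpos)]
    simp

section

variable {ι α : Type*} [Fintype ι] [DecidableEq ι]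

theorem Matrix.exp_neg_smul_conj_diagonal {V : Matrix ι ι ℝ} (hV : IsUnit V) (d : ι → ℝ)
    (τ : ℝ) :
    NormedSpace.exp (-(τ • (V * diagonal d * V⁻¹)))
      = V * diagonal (fun k => Real.exp (-d k * τ)) * V⁻¹ := by
  have hsmul : -(τ • (V * diagonal d * V⁻¹)) = V * diagonal (fun k => -d k * τ) * V⁻¹ := by
    rw [← neg_smul, ← smul_mul, ← Matrix.mul_smul, ← diagonal_smul]
    congr 3
    ext k
    simp [mul_comm]
  rw [hsmul, exp_conj V _ hV, exp_diagonal, Pi.exp_def]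
  simp_rw [Real.exp_eq_exp_ℝ]

lemma Matrix.mul_diagonal_mul_apply {R : Type*} [NonUnitalNonAssocSemiring R]
    (V W : Matrix ι ι R) (f : ι → R) (i j : ι) :
    (V * diagonal f * W) i j = ∑ k, V i k * f k * W k j := by
  rw [mul_apply]
  simp_rw [mul_diagonal]

variable [MeasurableSpace α] {μ : Measure α} {f : ι → α → ℝ}

lemma integrable_mul_diagonal_mul_apply (hf : ∀ k, Integrable (f k) μ) (V W : Matrix ι ι ℝ)
    (i j : ι) : Integrable (fun x => (V * diagonal (fun k => f k x) * W) i j) μ := by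
  simp_rw [mul_diagonal_mul_apply]
  exact integrable_finsetSum _ fun k _ => ((hf k).const_mul _).mul_const _

lemma integral_mul_diagonal_mul_apply (hf : ∀ k, Integrable (f k) μ) (V W : Matrix ι ι ℝ)
    (i j : ι) :
    ∫ x, (V * diagonal (fun k => f k x) * W) i j ∂μ
      = (V * diagonal (fun k => ∫ x, f k x ∂μ) * W) i j := by
  simp_rw [mul_diagonal_mul_apply]
  rw [integral_finsetSum _ fun k _ => ((hf k).const_mul _).mul_const _]
  simp_rw [integral_mul_const, integral_const_mul]

end

/-- Lemma 1 (integral identity): for `G = V D V⁻¹` diagonalizable with nonnegative real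
eigenvalues, the improper integral `∫₀^∞ (exp(−Gτ) − V E V⁻¹) dτ` converges entrywise and
equals `V D♯ V⁻¹`. -/
theorem stmt_0 {n : ℕ} (G V E Dsharp : Matrix (Fin n) (Fin n) ℝ) (d : Fin n → ℝ)
    (hV : IsUnit V.det) (hd : ∀ i, 0 ≤ d i)
    (hG : G = V * Matrix.diagonal d * V⁻¹)
    (hE : E = Matrix.diagonal (fun i => if d i = 0 then (1 : ℝ) else 0))
    (hDs : Dsharp = Matrix.diagonal (fun i => if d i ≠ 0 then (d i)⁻¹ else 0)) :
    ∀ i j,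
      IntegrableOn
        (fun τ : ℝ => (NormedSpace.exp (-(τ • G))) i j - (V * E * V⁻¹) i j)
        (Set.Ioi (0 : ℝ)) ∧
      ∫ τ in Set.Ioi (0 : ℝ),
          ((NormedSpace.exp (-(τ • G))) i j - (V * E * V⁻¹) i j)
        = (V * Dsharp * V⁻¹) i j := by
  set φ : Fin n → ℝ → ℝ := fun k τ => Real.exp (-d k * τ) - if d k = 0 then 1 else 0
  have hφ : ∀ k, IntegrableOn (φ k) (Ioi 0) := fun k => integrableOn_exp_neg_mul_sub_ite (hd k)
  have hsplit : ∀ τ : ℝ, NormedSpace.exp (-(τ • G)) - V * E * V⁻¹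
      = V * diagonal (fun k => φ k τ) * V⁻¹ := by
    intro τ
    rw [hG, exp_neg_smul_conj_diagonal ((isUnit_iff_isUnit_det V).mpr hV), hE, ← sub_mul,
      ← mul_sub, diagonal_sub]
  intro i j
  have hentry : ∀ τ : ℝ, NormedSpace.exp (-(τ • G)) i j - (V * E * V⁻¹) i j
      = (V * diagonal (fun k => φ k τ) * V⁻¹) i j := fun τ => by
    rw [← hsplit, Matrix.sub_apply]
  simp only [hentry]
  refine ⟨integrable_mul_diagonal_mul_apply hφ V V⁻¹ i j, ?_⟩
  rw [integral_mul_diagonal_mul_apply hφ, hDs]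
  simp_rw [φ, integral_exp_neg_mul_sub_ite (hd _)]
end

section
/- Let Γ > 0, θ ∈ ℝ, F ∈ ℝ, and set c = cos⁴θ, s = sin⁴θ, Γ_pop = Γ(c+s). Let G♯ = (Γ/Γ_pop²)·[[c, −c], [−s, s]], let x = (F, −F), and let Π = (s/(c+s), c/(c+s)). Then ∑_{i,j} Π_i x_i (G♯)_{ij} x_j = (4F²/Γ) · (s·c)/(c+s)³, i.e. the diffusion coefficient equals (4F²/Γ) sin⁴θ cos⁴θ / (sin⁴θ + cos⁴θ)³. -/
open Matrix Finset

/-!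
Against the antisymmetric observable `x = (F, -F)` the quadratic form only sees the row
differences of `G♯`, which for `k • !![c, -c; -s, s]` are `2kc` and `2ks`. Weighting them with
`Π = (s, c)/(c + s)` gives `4k F² s c/(c + s)`, and `k = Γ/Γ_pop² = 1/(Γ (c + s)²)`.
-/

section TwoState

variable {K : Type*} [Field K]

theorem sum_sum_mul_alternating (p : Fin 2 → K) (A : Matrix (Fin 2) (Fin 2) K) (F : K) :
    ∑ i, ∑ j, p i * ![F, -F] i * A i j * ![F, -F] j
      = F ^ 2 * (p 0 * (A 0 0 - A 0 1) + p 1 * (A 1 1 - A 1 0)) := by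
  simp only [Fin.sum_univ_two, cons_val_zero, cons_val_one]
  ring

theorem sum_sum_mul_alternating_smul_generator (p : Fin 2 → K) (k a b F : K) :
    ∑ i, ∑ j, p i * ![F, -F] i * (k • !![a, -a; -b, b]) i j * ![F, -F] j
      = 2 * k * F ^ 2 * (p 0 * a + p 1 * b) := by
  rw [sum_sum_mul_alternating]
  simp only [Matrix.smul_apply, of_apply, cons_val', cons_val_zero, cons_val_one, empty_val',
    cons_val_fin_one, smul_eq_mul]
  ring

theorem div_mul_sq_eq_inv_div (Γ u : K) : Γ / (Γ * u) ^ 2 = Γ⁻¹ / u ^ 2 := by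
  rw [mul_pow, ← div_div, sq, div_self_mul_self']

end TwoState

theorem stmt_6_general (Γ F : ℝ) (c s Γpop : ℝ)
    (hpop : Γpop = Γ * (c + s))
    (Gsharp : Matrix (Fin 2) (Fin 2) ℝ)
    (hGs : Gsharp = (Γ / Γpop ^ 2) • !![c, -c; -s, s])
    (x Pi : Fin 2 → ℝ)
    (hx : x = ![F, -F])
    (hPi : Pi = ![s / (c + s), c / (c + s)]) :
    ∑ i, ∑ j, Pi i * x i * Gsharp i j * x j
      = (4 * F ^ 2 / Γ) * (s * c) / (c + s) ^ 3 := by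
  subst hpop hGs hx hPi
  rw [sum_sum_mul_alternating_smul_generator, div_mul_sq_eq_inv_div]
  simp only [cons_val_zero, cons_val_one]
  -- otherwise `ring` expands `(c + s) ^ n` under `⁻¹` and loses the common factor
  generalize c + s = u
  ring

/-- Eq. (B27): the dipole-force diffusion coefficient of a two-level atom,
`⟨x, G♯ x⟩ = ∑ᵢⱼ Πᵢ xᵢ (G♯)ᵢⱼ xⱼ = (4F²/Γ)·s·c/(c+s)³`. -/
theorem stmt_6 (Γ θ F : ℝ) (hΓ : 0 < Γ) (c s Γpop : ℝ)
    (hc : c = (Real.cos θ) ^ 4) (hs : s = (Real.sin θ) ^ 4)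
    (hpop : Γpop = Γ * (c + s))
    (Gsharp : Matrix (Fin 2) (Fin 2) ℝ)
    (hGs : Gsharp = (Γ / Γpop ^ 2) • !![c, -c; -s, s])
    (x Pi : Fin 2 → ℝ)
    (hx : x = ![F, -F])
    (hPi : Pi = ![s / (c + s), c / (c + s)]) :
    ∑ i, ∑ j, Pi i * x i * Gsharp i j * x j
      = (4 * F ^ 2 / Γ) * (s * c) / (c + s) ^ 3 :=
  stmt_6_general Γ F c s Γpop hpop Gsharp hGs x Pi hx hPi
end
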